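/- Let P be a row-homogeneous p \times q polynomial matrix over T = F[s_0,...,s_n], and let a_1,...,a_p be nonnegative integers. If Q = diag(s_0^{a_1},...,s_0^{a_p}) P is regular at infinity (i.e., s_0 is a non-zero-divisor on the cokernel of Q^{tr}), then P is also regular at infinity. -/
import Mathlib


open MvPolynomial

/-- A polynomial matrix `M` over `T = F[s_0,…,s_n]` is regular at infinity if `s_0` is a
non-zero-divisor on `T^q / Im(Mᵗ)`, i.e. `s_0 f ∈ Im(Mᵗ)` implies `f ∈ Im(Mᵗ)`. -/
def RegularAtInfinity {F : Type*} [Field F] {n p q : ℕ}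
    (M : Matrix (Fin p) (Fin q) (MvPolynomial (Fin (n + 1)) F)) : Prop :=
  ∀ f : Fin q → MvPolynomial (Fin (n + 1)) F,
    ((X (0 : Fin (n + 1)) : MvPolynomial (Fin (n + 1)) F) • f) ∈ Set.range M.transpose.mulVec → f ∈ Set.range M.transpose.mulVec

/-- If `s_0` is a non-zero-divisor on the cokernel, so is any power of it. -/
lemma regAux {F : Type*} [Field F] {n p q : ℕ}
    {M : Matrix (Fin p) (Fin q) (MvPolynomial (Fin (n + 1)) F)}
    (hM : RegularAtInfinity M) :
    ∀ (k : ℕ) (f : Fin q → MvPolynomial (Fin (n + 1)) F),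
      ((X (0 : Fin (n + 1)) : MvPolynomial (Fin (n + 1)) F) ^ k • f) ∈ Set.range M.transpose.mulVec
        → f ∈ Set.range M.transpose.mulVec := by
  intro k
  induction k with
  | zero => intro f hf; simpa using hf
  | succ k ih =>
    intro f hf
    apply ih
    apply hM
    rw [smul_smul, ← pow_succ']
    exact hf

/-- Lemma 7: if `P` is a row-homogeneous `p × q` matrix over `T`, `a_1,…,a_p` are
nonnegative integers, and `Q = diag(s_0^{a_1},…,s_0^{a_p}) · P` is regular at
infinity, then so is `P`. -/
theorem regularAtInfinity_of_diag_mul (F : Type*) [Field F] (n p q : ℕ)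
    (P : Matrix (Fin p) (Fin q) (MvPolynomial (Fin (n + 1)) F))
    (r : Fin p → ℕ) (hrow : ∀ i j, (P i j).IsHomogeneous (r i))
    (a : Fin p → ℕ)
    (hQ : RegularAtInfinity ((Matrix.diagonal fun i => (X 0 : MvPolynomial (Fin (n + 1)) F) ^ a i) * P)) :
    RegularAtInfinity P := by
  classical
  set s : MvPolynomial (Fin (n + 1)) F := X 0 with hs
  set D : Matrix (Fin p) (Fin p) (MvPolynomial (Fin (n + 1)) F) :=
    Matrix.diagonal fun i => s ^ a i with hD
  set Q := D * P with hQdef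
  intro f hf
  obtain ⟨g, hg⟩ := hf
  set A := Finset.univ.sup a with hA
  -- Step 1: `s^(A+1) • f` lies in the image of `Qᵗ`.
  have key : (s ^ (A + 1)) • f ∈ Set.range Q.transpose.mulVec := by
    refine ⟨fun i => s ^ (A - a i) * g i, ?_⟩
    funext j
    have hgj : s * f j = ∑ i, P.transpose j i * g i := by
      have := congrFun hg j
      simpa [Matrix.mulVec, dotProduct] using this.symm
    have : ∀ i : Fin p, Q.transpose j i * (s ^ (A - a i) * g i)
        = s ^ A * (P.transpose j i * g i) := by
      intro i
      have hai : a i ≤ A := Finset.le_sup (Finset.mem_univ i)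
      have : s ^ a i * s ^ (A - a i) = s ^ A := by
        rw [← pow_add, Nat.add_sub_cancel' hai]
      have hQji : Q.transpose j i = s ^ a i * P i j := by
        rw [hQdef, hD, Matrix.transpose_apply, Matrix.diagonal_mul]
      rw [hQji]
      calc s ^ a i * P i j * (s ^ (A - a i) * g i)
          = (s ^ a i * s ^ (A - a i)) * (P i j * g i) := by ring
        _ = s ^ A * (P i j * g i) := by rw [this]
    calc Q.transpose.mulVec (fun i => s ^ (A - a i) * g i) j
        = ∑ i, Q.transpose j i * (s ^ (A - a i) * g i) := by
          simp [Matrix.mulVec, dotProduct]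
      _ = ∑ i, s ^ A * (P.transpose j i * g i) := by
          exact Finset.sum_congr rfl fun i _ => this i
      _ = s ^ A * ∑ i, P.transpose j i * g i := by rw [Finset.mul_sum]
      _ = s ^ A * (s * f j) := by rw [hgj]
      _ = (s ^ (A + 1) • f) j := by
          simp [pow_succ]; ring
  -- Step 2: by regularity of `Q`, `f` lies in the image of `Qᵗ`.
  obtain ⟨h, hh⟩ := regAux hQ (A + 1) f key
  -- Step 3: the image of `Qᵗ` is contained in the image of `Pᵗ`.
  refine ⟨D.mulVec h, ?_⟩
  rw [← hh, hQdef, Matrix.transpose_mul]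
  rw [← Matrix.mulVec_mulVec]
  congr 1
  rw [hD, Matrix.diagonal_transpose]
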